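/- Let S and T be finite multisets of integers all of whose elements lie in {1, 2, 3, 4}. If the products ∏_{ℓ ∈ S} (1 + (10 − ℓ)·X² + X⁴) and ∏_{ℓ ∈ T} (1 + (10 − ℓ)·X² + X⁴) are equal in ℤ[X], then S = T as multisets. -/

import Mathlib

/-!
Over an algebraically closed field every root `x` of `1 + c X² + X⁴` is nonzero and satisfies
`-(x² + x⁻²) = c`, so this map sends the four roots of the quartic to `c`. Applied to the roots of
a product of such quartics it returns each `c` four times, hence the product determines the
multiset of the `c`'s. Over a domain one first embeds into an algebraic closure of the fraction
field; finally `ℓ ↦ 10 - ℓ` is injective.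
-/

open Polynomial

section

variable {R K : Type*} [CommRing R] [Field K]

noncomputable def palindromicQuartic (c : R) : R[X] := 1 + C c * X ^ 2 + X ^ 4

theorem palindromicQuartic_map {R' : Type*} [CommRing R'] (f : R →+* R') (c : R) :
    (palindromicQuartic c).map f = palindromicQuartic (f c) := by
  simp [palindromicQuartic]

theorem map_prod_palindromicQuartic {R' : Type*} [CommRing R'] (f : R →+* R') (A : Multiset R) :
    (A.map palindromicQuartic).prod.map f = ((A.map f).map palindromicQuartic).prod := by
  simp only [Polynomial.map_multiset_prod, Multiset.map_map, Function.comp_def,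
    palindromicQuartic_map]

theorem natDegree_palindromicQuartic [Nontrivial R] (c : R) :
    (palindromicQuartic c).natDegree = 4 := by
  unfold palindromicQuartic; compute_degree!

theorem palindromicQuartic_ne_zero [Nontrivial R] (c : R) : palindromicQuartic c ≠ 0 :=
  ne_zero_of_natDegree_gt (n := 0) (by rw [natDegree_palindromicQuartic]; norm_num)

def quarticRootInvariant (x : K) : K := -(x ^ 2 + x⁻¹ ^ 2)

theorem quarticRootInvariant_of_isRoot {c x : K} (hx : (palindromicQuartic c).IsRoot x) :
    quarticRootInvariant x = c := by
  simp only [palindromicQuartic, IsRoot, eval_add, eval_one, eval_mul, eval_C, eval_pow,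
    eval_X] at hx
  have hx0 : x ≠ 0 := by rintro rfl; simp at hx
  unfold quarticRootInvariant
  field_simp
  linear_combination -hx

theorem roots_palindromicQuartic_map [IsAlgClosed K] (c : K) :
    (palindromicQuartic c).roots.map quarticRootInvariant = Multiset.replicate 4 c := by
  rw [Multiset.eq_replicate, Multiset.card_map, IsAlgClosed.card_roots_eq_natDegree,
    natDegree_palindromicQuartic]
  refine ⟨rfl, ?_⟩
  simp only [Multiset.mem_map, mem_roots (palindromicQuartic_ne_zero c)]
  rintro _ ⟨x, hx, rfl⟩
  exact quarticRootInvariant_of_isRoot hx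

theorem roots_prod_palindromicQuartic_map [IsAlgClosed K] (A : Multiset K) :
    (A.map palindromicQuartic).prod.roots.map quarticRootInvariant = 4 • A := by
  induction A using Multiset.induction with
  | empty => simp
  | cons c A ih =>
    rw [Multiset.map_cons, Multiset.prod_cons, roots_mul, Multiset.map_add, ih,
      roots_palindromicQuartic_map, Multiset.nsmul_cons, Multiset.nsmul_singleton]
    exact mul_ne_zero (palindromicQuartic_ne_zero c)
      (Multiset.prod_ne_zero (by simp [palindromicQuartic_ne_zero]))

theorem prod_palindromicQuartic_injective [IsDomain R] :
    Function.Injective fun A : Multiset R => (A.map palindromicQuartic).prod := by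
  let ι : R →+* AlgebraicClosure (FractionRing R) :=
    (algebraMap (FractionRing R) _).comp (algebraMap R (FractionRing R))
  have hι : Function.Injective ι :=
    (algebraMap (FractionRing R) _).injective.comp (IsFractionRing.injective R (FractionRing R))
  intro A B h
  have hmap :
      ((A.map ι).map palindromicQuartic).prod = ((B.map ι).map palindromicQuartic).prod := by
    simpa only [map_prod_palindromicQuartic] using congrArg (Polynomial.map ι) h
  have h4 := congrArg (fun p => p.roots.map quarticRootInvariant) hmap
  simp only [roots_prod_palindromicQuartic_map] at h4
  exact Multiset.map_injective hι (nsmul_right_injective four_ne_zero h4)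

end

theorem poincare_products_determine_multiset_general
    (S T : Multiset ℤ)
    (h : (S.map (fun ℓ => (1 : ℤ[X]) + C (10 - ℓ) * X ^ 2 + X ^ 4)).prod
       = (T.map (fun ℓ => (1 : ℤ[X]) + C (10 - ℓ) * X ^ 2 + X ^ 4)).prod) :
    S = T := by
  have hA : S.map (10 - ·) = T.map (10 - ·) := by
    apply prod_palindromicQuartic_injective
    simpa only [Multiset.map_map, Function.comp_def, palindromicQuartic] using h
  exact Multiset.map_injective sub_right_injective hA

theorem poincare_products_determine_multiset
    (S T : Multiset ℤ)
    (hS : ∀ ℓ ∈ S, 1 ≤ ℓ ∧ ℓ ≤ 4)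
    (hT : ∀ ℓ ∈ T, 1 ≤ ℓ ∧ ℓ ≤ 4)
    (h : (S.map (fun ℓ => (1 : ℤ[X]) + C (10 - ℓ) * X ^ 2 + X ^ 4)).prod
       = (T.map (fun ℓ => (1 : ℤ[X]) + C (10 - ℓ) * X ^ 2 + X ^ 4)).prod) :
    S = T :=
  poincare_products_determine_multiset_general S T h
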